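/- Suppose n > 1 and F : 𝔽₂ⁿ → 𝔽₂ⁿ is an APN function. If for all (a, b), (c, d) ∈ 𝔽₂ⁿ × 𝔽₂ⁿ with b ≠ F(a) and d ≠ F(c) the inequality |∑_{(u,v) : u·(a+c) ≠ v·(b+d)} (−1)^{v·b + u·a} · W_F(u,v)³| ≤ 2^{3n−1} − 2^{2n} holds (the sum ranging over pairs (u, v) ∈ 𝔽₂ⁿ × 𝔽₂ⁿ with u·(a+c) ≠ v·(b+d)), then the graph G_F is a maximal Sidon set. -/

import Mathlib

/-- The vector space `𝔽₂ⁿ`. -/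
abbrev V (n : ℕ) := Fin n → ZMod 2

/-- The standard inner product on `𝔽₂ⁿ`, valued in `𝔽₂`. -/
def ip {n : ℕ} (x y : V n) : ZMod 2 := ∑ i, x i * y i

/-- `F` is almost perfect nonlinear: for `a ≠ 0`, `F (x + a) + F x = b` has at most 2
solutions. -/
def IsAPN {G : Type*} [AddCommGroup G] [Fintype G] [DecidableEq G] (F : G → G) : Prop :=
  ∀ a b : G, a ≠ 0 → (Finset.univ.filter (fun x => F (x + a) + F x = b)).card ≤ 2

/-- The Walsh transform `W_F(u, v) = ∑_x (−1)^(v·F(x) + u·x)`. -/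
def walsh {n : ℕ} (F : V n → V n) (u v : V n) : ℤ :=
  ∑ x : V n, (-1 : ℤ) ^ (ip v (F x) + ip u x).val

/-- The graph `G_F = {(x, F(x)) : x ∈ 𝔽₂ⁿ}` of `F`, as a finite set. -/
def graphF {n : ℕ} (F : V n → V n) : Finset (V n × V n) :=
  Finset.univ.image (fun x => (x, F x))

/-- The exclude multiplicity of `y` w.r.t. `S`: the number of 3-element subsets of `S`
whose elements sum to `y`. -/
def excMult {G : Type*} [AddCommGroup G] [DecidableEq G] (S : Finset G) (y : G) : ℕ :=
  ((S.powersetCard 3).filter (fun T => T.sum id = y)).card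

/-- `S` is a maximal Sidon set. -/
def IsSidon {G : Type*} [AddCommGroup G] (S : Set G) : Prop :=
  ¬ ∃ a b c d : G, a ∈ S ∧ b ∈ S ∧ c ∈ S ∧ d ∈ S ∧
      a ≠ b ∧ a ≠ c ∧ a ≠ d ∧ b ≠ c ∧ b ≠ d ∧ c ≠ d ∧ a + b = c + d

def IsMaximalSidon {G : Type*} [AddCommGroup G] (S : Set G) : Prop :=
  IsSidon S ∧ ∀ T : Set G, IsSidon T → S ⊆ T → T = S

/-!
Write `T(a, b)` for the number of triples `(x, y, z)` with `x + y + z = a` and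
`F x + F y + F z = b`. Orthogonality of characters gives
`∑_{u,v} (-1)^(v·b + u·a) W_F(u, v)³ = 2^(2n) T(a, b)`, and the terms with
`u·(a + c) = v·(b + d)` are the same for `(a, b)` and `(c, d)`; so the hypothesis says
`|T(a, b) - T(c, d)| ≤ 2ⁿ - 2` for points off the graph. Off the graph every triple consists of
distinct points, and since `F` is APN three distinct graph points never sum to a graph point, so
`T` has average exactly `2ⁿ - 2` over the `2ⁿ(2ⁿ - 1)` points off the graph. If `T` vanished at
one of them, `T ≤ 2ⁿ - 2` everywhere would force `T = 2ⁿ - 2` everywhere, impossible for `n > 1`.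
Hence every point off the graph is `(x, F x) + (y, F y) + (z, F z)` for distinct `x, y, z`, and
adding it to the graph creates a relation `p + q = r + s`.
-/

open Finset

def IsDistinctTriple {α : Type*} (t : α × α × α) : Prop :=
  t.1 ≠ t.2.1 ∧ t.1 ≠ t.2.2 ∧ t.2.1 ≠ t.2.2

instance {α : Type*} [DecidableEq α] : DecidablePred (IsDistinctTriple (α := α)) :=
  fun _ => inferInstanceAs (Decidable (_ ∧ _ ∧ _))

def distinctTripleEquivEmbedding (α : Type*) :
    {t : α × α × α // IsDistinctTriple t} ≃ (Fin 3 ↪ α) where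
  toFun t := ⟨![t.1.1, t.1.2.1, t.1.2.2], by
    obtain ⟨⟨x, y, z⟩, hxy, hxz, hyz⟩ := t
    intro i j hij
    fin_cases i <;> fin_cases j <;> simp_all [eq_comm]⟩
  invFun f := ⟨(f 0, f 1, f 2), by simp [IsDistinctTriple, f.injective.ne_iff]⟩
  left_inv _ := rfl
  right_inv f := by ext i; fin_cases i <;> rfl

lemma card_filter_isDistinctTriple {α : Type*} [Fintype α] [DecidableEq α] :
    #{t : α × α × α | IsDistinctTriple t} =
      Fintype.card α * (Fintype.card α - 1) * (Fintype.card α - 2) := by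
  rw [← Fintype.card_subtype, Fintype.card_congr (distinctTripleEquivEmbedding α),
    Fintype.card_embedding_eq, Fintype.card_fin]
  simp [Nat.descFactorial_succ, mul_comm]

lemma isMaximalSidon_of_forall_notMem {G : Type*} [AddCommGroup G] {S : Set G} (hS : IsSidon S)
    (h : ∀ p ∉ S, ∃ q ∈ S, ∃ r ∈ S, ∃ s ∈ S, q ≠ r ∧ q ≠ s ∧ r ≠ s ∧ p + q = r + s) :
    IsMaximalSidon S := by
  refine ⟨hS, fun T hT hST => (hST.antisymm fun p hpT => ?_).symm⟩
  by_contra hpS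
  obtain ⟨q, hq, r, hr, s, hs, hqr, hqs, hrs, hsum⟩ := h p hpS
  exact hT ⟨p, q, r, s, hpT, hST hq, hST hr, hST hs, (ne_of_mem_of_not_mem hq hpS).symm,
    (ne_of_mem_of_not_mem hr hpS).symm, (ne_of_mem_of_not_mem hs hpS).symm, hqr, hqs, hrs, hsum⟩

section Finite

variable {G : Type*} [Fintype G] [DecidableEq G]

def triples [Add G] (F : G → G) (a b : G) : Finset (G × G × G) :=
  {t | t.1 + t.2.1 + t.2.2 = a ∧ F t.1 + F t.2.1 + F t.2.2 = b}

lemma mem_triples [Add G] {F : G → G} {a b : G} {t : G × G × G} :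
    t ∈ triples F a b ↔ t.1 + t.2.1 + t.2.2 = a ∧ F t.1 + F t.2.1 + F t.2.2 = b := by
  simp [triples]

def offGraph (F : G → G) : Finset (G × G) := {p | p.2 ≠ F p.1}

@[simp]
lemma mem_offGraph {F : G → G} {p : G × G} : p ∈ offGraph F ↔ p.2 ≠ F p.1 := by
  simp [offGraph]

lemma card_offGraph (F : G → G) :
    #(offGraph F) = Fintype.card G * (Fintype.card G - 1) := by
  rw [offGraph, card_filter, Fintype.sum_prod_type]
  simp only [← card_filter, filter_ne', mem_univ, card_erase_of_mem, card_univ, sum_const,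
    smul_eq_mul]

variable [AddCommGroup G] [Module (ZMod 2) G] {F : G → G}

lemma IsAPN.add_add_ne (hF : IsAPN F) {x y z : G} (hxy : x ≠ y) (hxz : x ≠ z) (hyz : y ≠ z) :
    F x + F y + F z ≠ F (x + y + z) := by
  intro h
  have hsol : ({x, y, z} : Finset G) ⊆ ({w | F (w + (x + y)) + F w = F x + F y} : Finset G) := by
    intro w hw
    simp only [mem_insert, mem_singleton] at hw
    rcases hw with rfl | rfl | rfl <;> simp only [mem_filter, mem_univ, true_and]
    · rw [← add_assoc, ZModModule.add_self, zero_add, add_comm]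
    · rw [add_left_comm, ZModModule.add_self, add_zero]
    · rw [add_comm w, ← h, add_assoc, ZModModule.add_self, add_zero]
  have hxy' : x + y ≠ 0 := by rwa [Ne, add_eq_zero_iff_eq_neg, ZModModule.neg_eq_self]
  have hcard := (card_le_card hsol).trans (hF (x + y) _ hxy')
  rw [card_eq_three.2 ⟨x, y, z, hxy, hxz, hyz, rfl⟩] at hcard
  omega

lemma isDistinctTriple_of_mem_triples {a b : G} (hab : b ≠ F a) {t : G × G × G}
    (ht : t ∈ triples F a b) : IsDistinctTriple t := by
  obtain ⟨x, y, z⟩ := t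
  obtain ⟨rfl, rfl⟩ := mem_triples.1 ht
  dsimp only [IsDistinctTriple] at hab ⊢
  refine ⟨?_, ?_, ?_⟩ <;> rintro rfl <;> apply hab
  · simp only [ZModModule.add_self, zero_add]
  · rw [add_right_comm, ZModModule.add_self, zero_add, add_right_comm, ZModModule.add_self,
      zero_add]
  · simp only [add_assoc, ZModModule.add_self, add_zero]

lemma sum_card_triples_offGraph (hF : IsAPN F) :
    ∑ p ∈ offGraph F, #(triples F p.1 p.2) =
      Fintype.card G * (Fintype.card G - 1) * (Fintype.card G - 2) := by
  let graphSum (t : G × G × G) : G × G := (t.1 + t.2.1 + t.2.2, F t.1 + F t.2.1 + F t.2.2)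
  have hmaps : Set.MapsTo graphSum {t | IsDistinctTriple t} (offGraph F) := by
    rintro t ⟨hxy, hxz, hyz⟩
    simpa [graphSum] using hF.add_add_ne hxy hxz hyz
  rw [← card_filter_isDistinctTriple, card_eq_sum_card_fiberwise (by simpa using hmaps)]
  refine sum_congr rfl fun p hp => congrArg card ?_
  ext t
  simp only [mem_filter, mem_univ, true_and, mem_triples, graphSum, Prod.ext_iff]
  exact ⟨fun h => ⟨isDistinctTriple_of_mem_triples (mem_offGraph.1 hp) (mem_triples.2 h), h⟩,
    fun h => h.2⟩

lemma IsAPN.isSidon_range (hF : IsAPN F) : IsSidon (Set.range fun x => (x, F x)) := by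
  rintro ⟨_, _, _, _, ⟨x, rfl⟩, ⟨y, rfl⟩, ⟨z, rfl⟩, ⟨w, rfl⟩, hxy, hxz, -, hyz, -, -, hsum⟩
  obtain ⟨hsum, hFsum⟩ : x + y = z + w ∧ F x + F y = F z + F w := Prod.ext_iff.1 hsum
  have hw : x + y + z = w := by rw [hsum, add_right_comm, ZModModule.add_self, zero_add]
  have hne {u v : G} (h : (u, F u) ≠ (v, F v)) : u ≠ v := ne_of_apply_ne (fun x => (x, F x)) h
  refine hF.add_add_ne (hne hxy) (hne hxz) (hne hyz) ?_
  rw [hw, hFsum, add_right_comm, ZModModule.add_self, zero_add]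

lemma IsAPN.isMaximalSidon_range (hF : IsAPN F)
    (h : ∀ a b, b ≠ F a → (triples F a b).Nonempty) :
    IsMaximalSidon (Set.range fun x => (x, F x)) := by
  refine isMaximalSidon_of_forall_notMem hF.isSidon_range fun p hp => ?_
  have hab : p.2 ≠ F p.1 := fun h => hp ⟨p.1, Prod.ext rfl h.symm⟩
  obtain ⟨⟨x, y, z⟩, ht⟩ := h p.1 p.2 hab
  obtain ⟨hxy, hxz, hyz⟩ := isDistinctTriple_of_mem_triples hab ht
  obtain ⟨hsum, hFsum⟩ := mem_triples.1 ht
  have cancel (u v w : G) : u + v + w + u = v + w := by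
    rw [add_comm _ u, ← add_assoc, ← add_assoc, ZModModule.add_self, zero_add]
  refine ⟨(x, F x), ⟨x, rfl⟩, (y, F y), ⟨y, rfl⟩, (z, F z), ⟨z, rfl⟩,
    fun h => hxy (congrArg Prod.fst h), fun h => hxz (congrArg Prod.fst h),
    fun h => hyz (congrArg Prod.fst h), Prod.ext ?_ ?_⟩
  · rw [Prod.fst_add, ← hsum]; exact cancel x y z
  · rw [Prod.snd_add, ← hFsum]; exact cancel (F x) (F y) (F z)

end Finite

section Walsh

variable {n : ℕ}

lemma neg_one_pow_val_add (s t : ZMod 2) :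
    (-1 : ℤ) ^ (s + t).val = (-1) ^ s.val * (-1) ^ t.val := by
  revert s t; decide

lemma neg_one_pow_val_sum {ι : Type*} (s : Finset ι) (f : ι → ZMod 2) :
    (-1 : ℤ) ^ (∑ i ∈ s, f i).val = ∏ i ∈ s, (-1 : ℤ) ^ (f i).val := by
  induction s using Finset.cons_induction with
  | empty => rfl
  | cons a s ha ih => rw [sum_cons, prod_cons, neg_one_pow_val_add, ih]

lemma ip_add_right (u x y : V n) : ip u (x + y) = ip u x + ip u y := dotProduct_add u x y

lemma sum_neg_one_pow_ip (x : V n) :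
    ∑ u : V n, (-1 : ℤ) ^ (ip u x).val = if x = 0 then 2 ^ n else 0 := by
  have hcoord (c : ZMod 2) : ∑ t : ZMod 2, (-1 : ℤ) ^ (t * c).val = if c = 0 then 2 else 0 := by
    revert c; decide
  simp only [ip, neg_one_pow_val_sum]
  rw [← Fintype.prod_sum (fun i t => (-1 : ℤ) ^ (t * x i).val)]
  simp only [hcoord, Fintype.prod_ite_zero, prod_const, card_univ, Fintype.card_fin, funext_iff,
    Pi.zero_apply]

lemma walsh_pow_three (F : V n → V n) (u v : V n) :
    walsh F u v ^ 3 = ∑ t : V n × V n × V n,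
      (-1 : ℤ) ^ (ip v (F t.1 + F t.2.1 + F t.2.2) + ip u (t.1 + t.2.1 + t.2.2)).val := by
  simp only [walsh, pow_three, sum_mul, mul_sum, Fintype.sum_prod_type, ip_add_right,
    neg_one_pow_val_add]
  refine sum_congr rfl fun x _ => sum_congr rfl fun y _ => sum_congr rfl fun z _ => by ring

lemma sum_neg_one_pow_mul_walsh_pow_three (F : V n → V n) (a b : V n) :
    ∑ uv : V n × V n, (-1 : ℤ) ^ (ip uv.2 b + ip uv.1 a).val * walsh F uv.1 uv.2 ^ 3 =
      2 ^ (2 * n) * #(triples F a b) := by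
  have hsign (t : V n × V n × V n) (u v : V n) :
      (-1 : ℤ) ^ (ip v b + ip u a).val *
          (-1 : ℤ) ^ (ip v (F t.1 + F t.2.1 + F t.2.2) + ip u (t.1 + t.2.1 + t.2.2)).val =
        (-1 : ℤ) ^ (ip u (t.1 + t.2.1 + t.2.2 + a)).val *
          (-1 : ℤ) ^ (ip v (F t.1 + F t.2.1 + F t.2.2 + b)).val := by
    simp only [ip_add_right, neg_one_pow_val_add]
    ring
  calc ∑ uv : V n × V n, (-1 : ℤ) ^ (ip uv.2 b + ip uv.1 a).val * walsh F uv.1 uv.2 ^ 3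
      = ∑ t : V n × V n × V n, ∑ uv : V n × V n,
          (-1 : ℤ) ^ (ip uv.1 (t.1 + t.2.1 + t.2.2 + a)).val *
            (-1 : ℤ) ^ (ip uv.2 (F t.1 + F t.2.1 + F t.2.2 + b)).val := by
        simp only [walsh_pow_three, mul_sum, hsign]
        exact sum_comm
    _ = ∑ t : V n × V n × V n, (if t.1 + t.2.1 + t.2.2 = a then 2 ^ n else 0) *
          (if F t.1 + F t.2.1 + F t.2.2 = b then 2 ^ n else 0) := by
        simp only [Fintype.sum_prod_type (α₁ := V n) (α₂ := V n), ← sum_mul_sum,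
          sum_neg_one_pow_ip, add_eq_zero_iff_eq_neg, ZModModule.neg_eq_self]
    _ = 2 ^ (2 * n) * #(triples F a b) := by
        rw [triples, card_filter, Nat.cast_sum, mul_sum]
        refine sum_congr rfl fun t _ => ?_
        rw [ite_zero_mul_ite_zero, ← pow_add, ← two_mul]
        split_ifs <;> simp

def separatingCubeSum (F : V n → V n) (a b c d : V n) : ℤ :=
  ∑ uv ∈ Finset.univ.filter (fun uv : V n × V n => ip uv.1 (a + c) ≠ ip uv.2 (b + d)),
    (-1 : ℤ) ^ (ip uv.2 b + ip uv.1 a).val * walsh F uv.1 uv.2 ^ 3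

lemma neg_one_pow_ip_eq_of_ip_eq {u v a b c d : V n} (h : ip u (a + c) = ip v (b + d)) :
    (-1 : ℤ) ^ (ip v b + ip u a).val = (-1 : ℤ) ^ (ip v d + ip u c).val := by
  rw [ip_add_right, ip_add_right] at h
  have htwo : (2 : ZMod 2) = 0 := rfl
  congr 2
  linear_combination h + (ip v b - ip u c) * htwo

lemma two_pow_mul_card_triples_sub (F : V n → V n) (a b c d : V n) :
    2 ^ (2 * n) * ((#(triples F a b) : ℤ) - #(triples F c d)) =
      separatingCubeSum F a b c d - separatingCubeSum F c d a b := by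
  rw [mul_sub, ← sum_neg_one_pow_mul_walsh_pow_three, ← sum_neg_one_pow_mul_walsh_pow_three,
    ← sum_sub_distrib, separatingCubeSum, separatingCubeSum, add_comm c a, add_comm d b,
    ← sum_sub_distrib, sum_filter_of_ne]
  intro uv _ hne
  contrapose! hne
  rw [neg_one_pow_ip_eq_of_ip_eq hne, sub_self]

lemma card_triples_le_card_triples_add (hn : 0 < n) {F : V n → V n} {a b c d : V n}
    (hab : |separatingCubeSum F a b c d| ≤ 2 ^ (3 * n - 1) - 2 ^ (2 * n))
    (hcd : |separatingCubeSum F c d a b| ≤ 2 ^ (3 * n - 1) - 2 ^ (2 * n)) :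
    #(triples F a b) ≤ #(triples F c d) + (2 ^ n - 2) := by
  have h2n : 2 ≤ 2 ^ n := Nat.le_self_pow hn.ne' 2
  have hpow : (2 : ℤ) * 2 ^ (3 * n - 1) = 2 ^ (2 * n) * 2 ^ n := by
    rw [← pow_succ', ← pow_add]; congr 1; omega
  have hdiff : 2 ^ (2 * n) * ((#(triples F a b) : ℤ) - #(triples F c d)) ≤
      2 ^ (2 * n) * (2 ^ n - 2) := by
    rw [two_pow_mul_card_triples_sub]
    linarith [le_abs_self (separatingCubeSum F a b c d), neg_abs_le (separatingCubeSum F c d a b)]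
  zify [h2n]
  linarith [le_of_mul_le_mul_left hdiff (by positivity)]

lemma triples_nonempty (hn : 1 < n) {F : V n → V n} (hF : IsAPN F)
    (hbound : ∀ a b c d : V n, b ≠ F a → d ≠ F c →
      |separatingCubeSum F a b c d| ≤ 2 ^ (3 * n - 1) - 2 ^ (2 * n))
    {a b : V n} (hab : b ≠ F a) : (triples F a b).Nonempty := by
  rw [nonempty_iff_ne_empty]
  intro hempty
  have hle : ∀ p ∈ offGraph F, #(triples F p.1 p.2) ≤ 2 ^ n - 2 := fun p hp => by
    rw [mem_offGraph] at hp
    simpa [hempty] using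
      card_triples_le_card_triples_add (by omega) (hbound _ _ _ _ hp hab) (hbound _ _ _ _ hab hp)
  have hcard : Fintype.card (V n) = 2 ^ n := by simp
  have hsum : ∑ p ∈ offGraph F, #(triples F p.1 p.2) = ∑ _p ∈ offGraph F, (2 ^ n - 2) := by
    rw [sum_card_triples_offGraph hF, sum_const, card_offGraph, smul_eq_mul, hcard]
  have hzero := (sum_eq_sum_iff_of_le hle).1 hsum (a, b) (mem_offGraph.2 hab)
  rw [hempty, card_empty] at hzero
  have h4 : 2 ^ 2 ≤ 2 ^ n := Nat.pow_le_pow_right two_pos hn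
  omega

end Walsh

/-- Let `n > 1` and `F : 𝔽₂ⁿ → 𝔽₂ⁿ` be APN. If for all `(a,b), (c,d)` off the
graph, `|∑_{(u,v) : u·(a+c) ≠ v·(b+d)} (−1)^(v·b + u·a) W_F(u,v)³| ≤ 2^{3n−1} − 2^{2n}`,
then `G_F` is a maximal Sidon set. -/
theorem walsh_bound_implies_graph_maximal (n : ℕ) (hn : 1 < n) (F : V n → V n)
    (hF : IsAPN F)
    (hbound : ∀ a b c d : V n, b ≠ F a → d ≠ F c →
      |∑ uv ∈ Finset.univ.filter
          (fun uv : V n × V n => ip uv.1 (a + c) ≠ ip uv.2 (b + d)),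
          (-1 : ℤ) ^ (ip uv.2 b + ip uv.1 a).val * walsh F uv.1 uv.2 ^ 3|
        ≤ 2 ^ (3 * n - 1) - 2 ^ (2 * n)) :
    IsMaximalSidon (graphF F : Set (V n × V n)) := by
  have hgraph : (graphF F : Set (V n × V n)) = Set.range fun x => (x, F x) := by
    simp [graphF]
  rw [hgraph]
  exact hF.isMaximalSidon_range fun a b hab => triples_nonempty hn hF hbound hab
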